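/- Let f : ℝⁿ → ℝ be convex attaining its minimum f⋆ at x⋆, and let G : ℝⁿ × ℝⁿ → ℝⁿ be a directional subgradient of f, i.e., for all x, p: G(x,p) ∈ ∂f(x) and ⟨G(x,p), p⟩ = sup_{ξ ∈ ∂f(x)} ⟨ξ, p⟩. Suppose that for some α > 0 there is a curve X : [0,α) → ℝⁿ, continuously differentiable on [0,α) and twice differentiable on (0,α), satisfying Ẍ(t) + (3/t)Ẋ(t) + G(X(t), Ẋ(t)) = 0 for 0 < t < α, with X(0) = x₀ and Ẋ(0) = 0. Then for every 0 < t < α, f(X(t)) − f⋆ ≤ 2‖x₀ − x⋆‖²/t². -/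

import Mathlib

open Set Filter Topology

noncomputable section

abbrev E (n : ℕ) := EuclideanSpace ℝ (Fin n)

/-- `ξ` is a subgradient of the convex function `f` at `x`:
`f(y) ≥ f(x) + ⟨ξ, y - x⟩` for all `y`. -/
def IsSubgradientAt (n : ℕ) (f : E n → ℝ) (x ξ : E n) : Prop :=
  ∀ y, f x + (inner ℝ ξ (y - x) : ℝ) ≤ f y

/-- `G` is a directional subgradient of `f`: for all `x, p`, `G(x,p) ∈ ∂f(x)` and
`⟨G(x,p), p⟩ = sup_{ξ ∈ ∂f(x)} ⟨ξ, p⟩` (the sup is attained at `G(x,p)`). -/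
def IsDirectionalSubgradient (n : ℕ) (f : E n → ℝ) (G : E n → E n → E n) : Prop :=
  ∀ x p, IsSubgradientAt n f x (G x p) ∧
    ∀ ξ, IsSubgradientAt n f x ξ → (inner ℝ ξ p : ℝ) ≤ (inner ℝ (G x p) p : ℝ)

/-- A solution on `[0,α)` of the non-smooth ODE `Ẍ + (3/t)Ẋ + G(X, Ẋ) = 0`, `X(0) = x₀`,
`Ẋ(0) = 0`: C¹ on `[0,α)`, twice differentiable on `(0,α)`. -/
def NonsmoothNesterovSol (n : ℕ) (G : E n → E n → E n) (x0 : E n) (α : ℝ)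
    (X : ℝ → E n) : Prop :=
  X 0 = x0 ∧
  ContDiffOn ℝ 1 X (Set.Ico 0 α) ∧
  derivWithin X (Set.Ico 0 α) 0 = 0 ∧
  ∀ t ∈ Set.Ioo (0:ℝ) α,
    DifferentiableAt ℝ (deriv X) t ∧
    deriv (deriv X) t + (3 / t) • deriv X t + G (X t) (deriv X t) = 0

/-!
A Lyapunov argument: the energy `E(t) = t² (f(X t) - f x⋆) + 2 ‖X t + (t/2) Ẋ t - x⋆‖²` is
nonincreasing, so `t² (f(X t) - f x⋆) ≤ E(t) ≤ E(0) = 2 ‖x₀ - x⋆‖²`.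

Although `f ∘ X` need not be differentiable, it has right derivative `⟨G(X, Ẋ), Ẋ⟩`: its slopes
are squeezed between pairings with subgradients at the two endpoints, and the subdifferential of
a continuous convex function is locally bounded with closed graph, so subgradients at `X z`,
`z ↓ t`, accumulate at a subgradient at `X t`, whose pairing with `Ẋ` is at most the maximal one
`⟨G(X, Ẋ), Ẋ⟩`. Along the ODE the right derivative of `E` is `2t (f(X) - f x⋆ - ⟨G, X - x⋆⟩)`,
which is nonpositive by the subgradient inequality.
-/

variable {n : ℕ} {f : E n → ℝ}

namespace IsSubgradientAt

theorem sub_le_inner {x y ξ : E n} (hξ : IsSubgradientAt n f x ξ) :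
    f x - f y ≤ inner ℝ ξ (x - y) := by
  have h := hξ y
  rw [← neg_sub, inner_neg_right] at h
  linarith

theorem norm_le {x ξ : E n} {M : ℝ} (hξ : IsSubgradientAt n f x ξ)
    (hM : ∀ y ∈ Metric.closedBall x 1, f y - f x ≤ M) : ‖ξ‖ ≤ M := by
  rcases eq_or_ne ξ 0 with rfl | hξ0
  · simpa using hM x (Metric.mem_closedBall_self zero_le_one)
  have hpos : 0 < ‖ξ‖ := norm_pos_iff.2 hξ0
  set y := x + ‖ξ‖⁻¹ • ξ
  have hy : y ∈ Metric.closedBall x 1 := by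
    simp [y, norm_smul, hpos.ne']
  have hinner : inner ℝ ξ (y - x) = ‖ξ‖ := by
    simp only [y, add_sub_cancel_left, real_inner_smul_right, real_inner_self_eq_norm_sq]
    field_simp
  linarith [hξ y, hM y hy]

theorem of_tendsto {ι : Type*} {l : Filter ι} [l.NeBot] (hf : Continuous f)
    {x ξ : E n} {y u : ι → E n} (hy : Tendsto y l (𝓝 x)) (hu : Tendsto u l (𝓝 ξ))
    (h : ∀ᶠ i in l, IsSubgradientAt n f (y i) (u i)) : IsSubgradientAt n f x ξ := fun z =>
  le_of_tendsto (((hf.tendsto x).comp hy).add (hu.inner (tendsto_const_nhds.sub hy)))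
    (h.mono fun _ hi => hi z)

theorem inner_slope_le {X : ℝ → E n} {s z : ℝ} {ξ : E n}
    (hξ : IsSubgradientAt n f (X s) ξ) (hsz : s ≤ z) :
    inner ℝ ξ (slope X s z) ≤ slope (f ∘ X) s z := by
  rw [slope_def_field, slope_def_module, real_inner_smul_right, div_eq_inv_mul]
  exact mul_le_mul_of_nonneg_left (by simp only [Function.comp_apply]; linarith [hξ (X z)])
    (inv_nonneg.2 (sub_nonneg.2 hsz))

theorem slope_le_inner {X : ℝ → E n} {s z : ℝ} {ξ : E n}
    (hξ : IsSubgradientAt n f (X z) ξ) (hsz : s ≤ z) :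
    slope (f ∘ X) s z ≤ inner ℝ ξ (slope X s z) := by
  rw [slope_def_field, slope_def_module, real_inner_smul_right, div_eq_inv_mul]
  exact mul_le_mul_of_nonneg_left hξ.sub_le_inner (inv_nonneg.2 (sub_nonneg.2 hsz))

end IsSubgradientAt

theorem exists_norm_le_of_isSubgradientAt_mem_closedBall (hf : Continuous f) (x : E n) :
    ∃ K, ∀ y ∈ Metric.closedBall x 1, ∀ ξ, IsSubgradientAt n f y ξ → ‖ξ‖ ≤ K := by
  obtain ⟨C, hC⟩ := (isCompact_closedBall x 2).exists_bound_of_continuousOn hf.continuousOn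
  refine ⟨2 * C, fun y hy ξ hξ => hξ.norm_le fun z hz => ?_⟩
  have hz2 : z ∈ Metric.closedBall x 2 := by
    rw [Metric.mem_closedBall] at hy hz ⊢
    linarith [dist_triangle z y x]
  have hy2 : y ∈ Metric.closedBall x 2 := Metric.closedBall_subset_closedBall one_le_two hy
  linarith [(abs_le.1 (hC z hz2)).2, (abs_le.1 (hC y hy2)).1]

namespace IsDirectionalSubgradient

variable {G : E n → E n → E n} {X : ℝ → E n} {s : ℝ} {v : E n}

theorem eventually_slope_comp_lt (hG : IsDirectionalSubgradient n f G) (hf : Continuous f)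
    (hX : HasDerivAt X v s) {a : ℝ} (ha : inner ℝ (G (X s) v) v < a) :
    ∀ᶠ z in 𝓝[>] s, slope (f ∘ X) s z < a := by
  by_contra hcon
  have : (𝓝[>] s ⊓ 𝓟 {z | a ≤ slope (f ∘ X) s z}).NeBot := by
    simpa [not_eventually, frequently_iff_neBot] using hcon
  obtain ⟨U, hU⟩ := exists_ultrafilter_le (𝓝[>] s ⊓ 𝓟 {z | a ≤ slope (f ∘ X) s z})
  have hUs : (U : Filter ℝ) ≤ 𝓝[>] s := hU.trans inf_le_left
  have hXU : Tendsto X U (𝓝 (X s)) := hX.continuousAt.tendsto.mono_left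
    (hUs.trans nhdsWithin_le_nhds)
  have hslope : Tendsto (slope X s) U (𝓝 v) :=
    ((hasDerivWithinAt_iff_tendsto_slope' self_notMem_Ioi).1 hX.hasDerivWithinAt).mono_left hUs
  obtain ⟨K, hK⟩ := exists_norm_le_of_isSubgradientAt_mem_closedBall hf (X s)
  have hbounded : ∀ᶠ z in U, G (X z) v ∈ Metric.closedBall 0 K :=
    (hXU.eventually (Metric.closedBall_mem_nhds _ one_pos)).mono fun z hz =>
      mem_closedBall_zero_iff.2 (hK _ hz _ (hG _ v).1)
  obtain ⟨ξ, -, hξ⟩ := (isCompact_closedBall (0 : E n) K).ultrafilter_le_nhds'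
    (U.map fun z => G (X z) v) hbounded
  replace hξ : Tendsto (fun z => G (X z) v) U (𝓝 ξ) := hξ
  have hξsub : IsSubgradientAt n f (X s) ξ :=
    IsSubgradientAt.of_tendsto hf hXU hξ (Eventually.of_forall fun z => (hG _ v).1)
  have hle : ∀ᶠ z in U, a ≤ inner ℝ (G (X z) v) (slope X s z) := by
    filter_upwards [hU (mem_inf_of_right (mem_principal_self _)),
      hUs self_mem_nhdsWithin] with z haz hsz
    exact haz.trans ((hG _ v).1.slope_le_inner (le_of_lt hsz))
  linarith [ge_of_tendsto (hξ.inner hslope) hle, (hG (X s) v).2 ξ hξsub]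

theorem hasDerivWithinAt_comp_Ioi (hG : IsDirectionalSubgradient n f G) (hf : Continuous f)
    (hX : HasDerivAt X v s) :
    HasDerivWithinAt (f ∘ X) (inner ℝ (G (X s) v) v) (Ioi s) s := by
  have hslope : Tendsto (slope X s) (𝓝[>] s) (𝓝 v) :=
    (hasDerivWithinAt_iff_tendsto_slope' self_notMem_Ioi).1 hX.hasDerivWithinAt
  refine (hasDerivWithinAt_iff_tendsto_slope' self_notMem_Ioi).2 (tendsto_order.2 ⟨?_, ?_⟩)
  · intro a ha
    filter_upwards [(tendsto_const_nhds.inner hslope).eventually_const_lt ha,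
      self_mem_nhdsWithin] with z hz hsz
    exact hz.trans_le ((hG _ v).1.inner_slope_le (le_of_lt hsz))
  · exact fun a ha => hG.eventually_slope_comp_lt hf hX ha

end IsDirectionalSubgradient

theorem le_of_hasDerivWithinAt_Ioi_nonpos {g g' : ℝ → ℝ} {a b : ℝ} (hab : a ≤ b)
    (hg : ContinuousOn g (Icc a b)) (hg' : ∀ x ∈ Ioo a b, HasDerivWithinAt g (g' x) (Ioi x) x)
    (hnonpos : ∀ x ∈ Ioo a b, g' x ≤ 0) : g b ≤ g a := by
  rcases hab.eq_or_lt with rfl | hab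
  · rfl
  have hle : ∀ c ∈ Ioo a b, g b ≤ g c := fun c hc =>
    image_le_of_deriv_right_le_deriv_boundary (hg.mono (Icc_subset_Icc_left hc.1.le))
      (fun x hx => (hg' x ⟨hc.1.trans_le hx.1, hx.2⟩).Ici_of_Ioi) (B := fun _ => g c) le_rfl
      continuousOn_const
      (fun x _ => hasDerivWithinAt_const x _ (g c))
      (fun x hx => hnonpos x ⟨hc.1.trans_le hx.1, hx.2⟩) (right_mem_Icc.2 hc.2.le)
  have hlim : Tendsto g (𝓝[>] a) (𝓝 (g a)) :=
    (hg a (left_mem_Icc.2 hab.le)).mono_of_mem_nhdsWithin (Icc_mem_nhdsGT hab)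
  exact ge_of_tendsto hlim (Ioo_mem_nhdsGT hab |> Filter.mem_of_superset <| hle)

/-- `V` plays the role of `Ẋ`; a solution supplies it as `derivWithin X (Ico 0 α)`, which, unlike
`deriv X`, is continuous up to `t = 0`. -/
def lyapunovEnergy (f : E n → ℝ) (xstar : E n) (X V : ℝ → E n) (t : ℝ) : ℝ :=
  t ^ 2 * (f (X t) - f xstar) + 2 * ‖X t + (t / 2) • V t - xstar‖ ^ 2

theorem hasDerivWithinAt_lyapunovEnergy {G : E n → E n → E n}
    (hG : IsDirectionalSubgradient n f G) (hf : Continuous f) (xstar : E n) {X V : ℝ → E n}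
    {s : ℝ} {a : E n} (hs : s ≠ 0) (hX : HasDerivAt X (V s) s) (hV : HasDerivAt V a s)
    (hode : a + (3 / s) • V s + G (X s) (V s) = 0) :
    HasDerivWithinAt (lyapunovEnergy f xstar X V)
      (2 * s * (f (X s) - f xstar - inner ℝ (G (X s) (V s)) (X s - xstar))) (Ioi s) s := by
  set g := G (X s) (V s)
  have hW : HasDerivAt (fun t => X t + (t / 2) • V t - xstar) (-(s / 2) • g) s := by
    have ha : a = -((3 / s) • V s + g) := by rw [eq_neg_iff_add_eq_zero, ← add_assoc, hode]
    refine ((hX.add (((hasDerivAt_id' s).div_const 2).smul hV)).sub_const xstar).congr_deriv ?_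
    rw [ha]
    match_scalars
    · field_simp
      ring
    · ring
  have hφ := ((hG.hasDerivWithinAt_comp_Ioi hf hX).sub_const (f xstar))
  refine HasDerivWithinAt.congr_deriv (f := lyapunovEnergy f xstar X V)
    (((hasDerivAt_pow 2 s).hasDerivWithinAt.mul hφ).add
      ((hW.norm_sq.const_mul 2).hasDerivWithinAt)) ?_
  have hsplit : X s + (s / 2) • V s - xstar = (X s - xstar) + (s / 2) • V s := by abel
  rw [hsplit, real_inner_smul_right, inner_add_left, real_inner_smul_left,
    real_inner_comm g, real_inner_comm g, Function.comp_apply]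
  push_cast
  ring

theorem NonsmoothNesterovSol.lyapunovEnergy_le {G : E n → E n → E n}
    (hG : IsDirectionalSubgradient n f G) (hf : Continuous f) {x0 : E n} {α : ℝ}
    {X : ℝ → E n} (hX : NonsmoothNesterovSol n G x0 α X) (xstar : E n) {t : ℝ}
    (ht : t ∈ Ioo 0 α) :
    lyapunovEnergy f xstar X (derivWithin X (Ico 0 α)) t ≤ 2 * ‖x0 - xstar‖ ^ 2 := by
  obtain ⟨hX0, hC1, -, hode⟩ := hX
  set V := derivWithin X (Ico 0 α)
  have hV : ∀ s ∈ Ioo 0 α, V =ᶠ[𝓝 s] deriv X := fun s hs => by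
    filter_upwards [isOpen_Ioo.mem_nhds hs] with z hz
    exact derivWithin_of_mem_nhds (Ico_mem_nhds hz.1 hz.2)
  have hcont : ContinuousOn (lyapunovEnergy f xstar X V) (Ico 0 α) := by
    have hXc := hC1.continuousOn
    have hVc := hC1.continuousOn_derivWithin (uniqueDiffOn_Ico 0 α) le_rfl
    unfold lyapunovEnergy
    fun_prop
  have hderiv : ∀ s ∈ Ioo 0 α, HasDerivWithinAt (lyapunovEnergy f xstar X V)
      (2 * s * (f (X s) - f xstar - inner ℝ (G (X s) (V s)) (X s - xstar))) (Ioi s) s := by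
    intro s hs
    have hXs : HasDerivAt X (V s) s :=
      (hC1.differentiableOn one_ne_zero s (Ioo_subset_Ico_self hs)).hasDerivWithinAt.hasDerivAt
        (Ico_mem_nhds hs.1 hs.2)
    refine hasDerivWithinAt_lyapunovEnergy hG hf xstar hs.1.ne' hXs
      ((hode s hs).1.hasDerivAt.congr_of_eventuallyEq (hV s hs)) ?_
    simpa only [(hV s hs).eq_of_nhds] using (hode s hs).2
  have hmono := le_of_hasDerivWithinAt_Ioi_nonpos ht.1.le
    (hcont.mono (Icc_subset_Ico_right ht.2))
    (fun s hs => hderiv s ⟨hs.1, hs.2.trans ht.2⟩)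
    (fun s hs => mul_nonpos_of_nonneg_of_nonpos (by linarith [hs.1])
      (sub_nonpos.2 (hG _ _).1.sub_le_inner))
  simpa [lyapunovEnergy, hX0] using hmono

theorem nonsmooth_ode_rate_general (n : ℕ) (f : E n → ℝ) (hconv : ConvexOn ℝ Set.univ f)
    (xstar : E n)
    (G : E n → E n → E n) (hG : IsDirectionalSubgradient n f G)
    (α : ℝ) (x0 : E n) (X : ℝ → E n)
    (hX : NonsmoothNesterovSol n G x0 α X) :
    ∀ t ∈ Set.Ioo (0:ℝ) α, f (X t) - f xstar ≤ 2 * ‖x0 - xstar‖ ^ 2 / t ^ 2 := by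
  intro t ht
  have hf : Continuous f := continuousOn_univ.1 (hconv.continuousOn isOpen_univ)
  have hE := hX.lyapunovEnergy_le hG hf xstar ht
  have hsq : t ^ 2 * (f (X t) - f xstar) ≤ lyapunovEnergy f xstar X (derivWithin X (Ico 0 α)) t :=
    le_add_of_nonneg_right (by positivity)
  rw [le_div_iff₀ (pow_pos ht.1 2), mul_comm]
  exact hsq.trans hE

/-- **Theorem (composite/non-smooth case).** If `f` is convex with minimizer `x⋆`, `G` is a
directional subgradient of `f`, and `X` solves `Ẍ + (3/t)Ẋ + G(X, Ẋ) = 0` on `[0,α)` with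
`X(0) = x₀`, `Ẋ(0) = 0`, then `f(X(t)) - f⋆ ≤ 2‖x₀ - x⋆‖²/t²` for `0 < t < α`. -/
theorem nonsmooth_ode_rate (n : ℕ) (f : E n → ℝ) (hconv : ConvexOn ℝ Set.univ f)
    (xstar : E n) (hmin : IsMinOn f Set.univ xstar)
    (G : E n → E n → E n) (hG : IsDirectionalSubgradient n f G)
    (α : ℝ) (hα : 0 < α) (x0 : E n) (X : ℝ → E n)
    (hX : NonsmoothNesterovSol n G x0 α X) :
    ∀ t ∈ Set.Ioo (0:ℝ) α, f (X t) - f xstar ≤ 2 * ‖x0 - xstar‖ ^ 2 / t ^ 2 :=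
  nonsmooth_ode_rate_general n f hconv xstar G hG α x0 X hX
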